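/- arXiv:2604.16671 — 4 statements merged into one kernel-verified Lean document; each statement's English description precedes it below -/
import Mathlib

section
/- Under the setup of the MEA power analysis with equal trigger rates r ∈ (0,1), ℓ variants per experiment (ℓ ≥ 1), and k ≥ 1 experiments, the variance ratio ((1+(ℓ−1)r)^k − (1−r)^k) / (ℓ^k (1 − (1−r)^k)) is at most 1. -/
/-! Writing `a = 1 - r`, the claim is `(1 + (ℓ - 1) r)^k + (ℓ^k - 1) a^k ≤ ℓ^k`. Since
`1 + (ℓ - 1) r = a · 1 + r · ℓ` is a convex combination, convexity of `x ↦ x^k` bounds the first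
term by `a + r ℓ^k`; and `a^k ≤ a` bounds the second by `(ℓ^k - 1) a`. The two bounds add up to
exactly `ℓ^k`. -/

open Set

lemma one_add_sub_one_mul_pow_le (k : ℕ) {r ℓ : ℝ} (hr0 : 0 ≤ r) (hr1 : r ≤ 1) (hℓ : 0 ≤ ℓ) :
    (1 + (ℓ - 1) * r) ^ k ≤ (1 - r) + r * ℓ ^ k := by
  have h := (convexOn_pow k).2 (mem_Ici.2 zero_le_one) (mem_Ici.2 hℓ) (sub_nonneg.2 hr1) hr0
    (sub_add_cancel 1 r)
  simp only [smul_eq_mul, one_pow, mul_one] at h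
  rwa [show (1 - r) + r * ℓ = 1 + (ℓ - 1) * r by ring] at h

lemma one_add_sub_one_mul_pow_sub_pow_le {k : ℕ} (hk : k ≠ 0) {r ℓ : ℝ} (hr0 : 0 ≤ r)
    (hr1 : r ≤ 1) (hℓ : 1 ≤ ℓ) :
    (1 + (ℓ - 1) * r) ^ k - (1 - r) ^ k ≤ ℓ ^ k * (1 - (1 - r) ^ k) := by
  have hconv := one_add_sub_one_mul_pow_le k hr0 hr1 (zero_le_one.trans hℓ)
  have hpow : (1 - r) ^ k ≤ 1 - r := pow_le_of_le_one (sub_nonneg.2 hr1) (by linarith) hk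
  have hℓk : 1 ≤ ℓ ^ k := one_le_pow₀ hℓ
  nlinarith [mul_le_mul_of_nonneg_left hpow (sub_nonneg.2 hℓk)]

/-- The MEA-to-factorial variance ratio is at most 1: for equal trigger rates
`r ∈ (0,1)`, `ℓ ≥ 1` variants per experiment, and `k ≥ 1` experiments,
`((1+(ℓ−1)r)^k − (1−r)^k) / (ℓ^k (1 − (1−r)^k)) ≤ 1`. -/
theorem mea_variance_ratio_le_one
    (k : ℕ) (hk : 1 ≤ k) (r ℓ : ℝ) (hr0 : 0 < r) (hr1 : r < 1) (hℓ : 1 ≤ ℓ) :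
    ((1 + (ℓ - 1) * r) ^ k - (1 - r) ^ k) / (ℓ ^ k * (1 - (1 - r) ^ k)) ≤ 1 := by
  have hden : 0 ≤ ℓ ^ k * (1 - (1 - r) ^ k) :=
    mul_nonneg (pow_nonneg (zero_le_one.trans hℓ) k)
      (sub_nonneg.2 (pow_le_one₀ (by linarith) (by linarith)))
  exact div_le_one_of_le₀
    (one_add_sub_one_mul_pow_sub_pow_le (Nat.one_le_iff_ne_zero.1 hk) hr0.le hr1.le hℓ) hden
end

section
/- Cramér's V statistic V = sqrt(χ² / (N·min(k₁−1, k₂−1))) satisfies 0 ≤ V ≤ 1 when χ² is the Pearson chi-squared statistic of a k₁×k₂ contingency table with total count N. -/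
/-!
Write `r`, `c` for the row and column sums, so that `e i j = r i * c j / N`. Expanding the
square and using `∑ e = ∑ n = N` gives `χ² = ∑ n²/e - N`. Since
`n²/e = N * (n / r i) * (n / c j)` and `n i j ≤ c j`, each term satisfies
`n²/e ≤ N * n / r i`, so every row contributes at most `N` to `∑ n²/e`; hence
`χ² ≤ N * (k₁ - 1)`, and by transposing the table also `χ² ≤ N * (k₂ - 1)`.
-/

open Finset

noncomputable section

namespace ContingencyTable

variable {ι κ : Type*}

def rowSum [Fintype κ] (n : ι → κ → ℝ) (i : ι) : ℝ := ∑ j, n i j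

def colSum [Fintype ι] (n : ι → κ → ℝ) (j : κ) : ℝ := ∑ i, n i j

lemma rowSum_nonneg [Fintype κ] {n : ι → κ → ℝ} (hn : ∀ i j, 0 ≤ n i j) (i : ι) :
    0 ≤ rowSum n i :=
  sum_nonneg fun j _ => hn i j

lemma colSum_nonneg [Fintype ι] {n : ι → κ → ℝ} (hn : ∀ i j, 0 ≤ n i j) (j : κ) :
    0 ≤ colSum n j :=
  sum_nonneg fun i _ => hn i j

lemma le_colSum [Fintype ι] {n : ι → κ → ℝ} (hn : ∀ i j, 0 ≤ n i j) (i : ι) (j : κ) :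
    n i j ≤ colSum n j :=
  single_le_sum (fun i _ => hn i j) (mem_univ i)

variable [Fintype ι] [Fintype κ] (n : ι → κ → ℝ)

def total : ℝ := ∑ i, ∑ j, n i j

def expected (i : ι) (j : κ) : ℝ := rowSum n i * colSum n j / total n

def chiSq : ℝ := ∑ i, ∑ j, (n i j - expected n i j) ^ 2 / expected n i j

lemma sum_colSum : ∑ j, colSum n j = total n := sum_comm

lemma total_transpose : total (fun j i => n i j) = total n := sum_comm

lemma expected_transpose (j : κ) (i : ι) :
    expected (fun j i => n i j) j i = expected n i j := by
  rw [expected, expected, total_transpose, mul_comm]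
  rfl

lemma chiSq_transpose : chiSq (fun j i => n i j) = chiSq n := by
  simp only [chiSq, expected_transpose]
  exact sum_comm

lemma sum_expected : ∑ i, ∑ j, expected n i j = total n := by
  simp only [expected, ← sum_div, ← sum_mul_sum, sum_colSum]
  exact mul_self_div_self (total n)

lemma chiSq_eq_sum_sq_div_sub_total (he : ∀ i j, expected n i j ≠ 0) :
    chiSq n = ∑ i, ∑ j, n i j ^ 2 / expected n i j - total n := by
  have expand : ∀ i j, (n i j - expected n i j) ^ 2 / expected n i j
      = n i j ^ 2 / expected n i j - 2 * n i j + expected n i j := by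
    intro i j
    field_simp [he i j]
    ring
  simp only [chiSq, expand, sum_add_distrib, sum_sub_distrib, ← mul_sum,
    sum_expected]
  rw [total]
  ring

variable {n}

lemma total_nonneg (hn : ∀ i j, 0 ≤ n i j) : 0 ≤ total n :=
  sum_nonneg fun i _ => rowSum_nonneg hn i

lemma sq_div_expected_le (hn : ∀ i j, 0 ≤ n i j) (i : ι) (j : κ) :
    n i j ^ 2 / expected n i j ≤ total n * (n i j / rowSum n i) :=
  calc n i j ^ 2 / expected n i j
        = total n * (n i j / rowSum n i) * (n i j / colSum n j) := by
          rw [expected, div_div_eq_mul_div]; ring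
    _ ≤ total n * (n i j / rowSum n i) :=
        mul_le_of_le_one_right
          (mul_nonneg (total_nonneg hn) (div_nonneg (hn i j) (rowSum_nonneg hn i)))
          (div_le_one_of_le₀ (le_colSum hn i j) (colSum_nonneg hn j))

lemma sum_sq_div_expected_le_total (hn : ∀ i j, 0 ≤ n i j) (i : ι) :
    ∑ j, n i j ^ 2 / expected n i j ≤ total n :=
  calc ∑ j, n i j ^ 2 / expected n i j ≤ ∑ j, total n * (n i j / rowSum n i) :=
        sum_le_sum fun j _ => sq_div_expected_le hn i j
    _ = total n * (rowSum n i / rowSum n i) := by rw [← mul_sum, ← sum_div]; rfl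
    _ ≤ total n := mul_le_of_le_one_right (total_nonneg hn) (div_self_le_one _)

lemma chiSq_le_total_mul_card_sub_one (hn : ∀ i j, 0 ≤ n i j) (he : ∀ i j, expected n i j ≠ 0) :
    chiSq n ≤ total n * (Fintype.card ι - 1) := by
  have hsum : ∑ i, ∑ j, n i j ^ 2 / expected n i j ≤ Fintype.card ι * total n := by
    simpa using sum_le_sum fun i (_ : i ∈ univ) => sum_sq_div_expected_le_total hn i
  rw [chiSq_eq_sum_sq_div_sub_total n he]
  linarith

lemma chiSq_le_total_mul_min (hn : ∀ i j, 0 ≤ n i j) (he : ∀ i j, expected n i j ≠ 0) :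
    chiSq n ≤ total n * (min (Fintype.card ι - 1) (Fintype.card κ - 1) : ℕ) := by
  have sub_one_le_cast : ∀ k : ℕ, (k : ℝ) - 1 ≤ ((k - 1 : ℕ) : ℝ) := by
    intro k; rcases k with _ | k <;> simp
  have hN := total_nonneg hn
  rw [Nat.cast_min, mul_min_of_nonneg _ _ hN]
  refine le_min ?_ ?_
  · exact (chiSq_le_total_mul_card_sub_one hn he).trans
      (mul_le_mul_of_nonneg_left (sub_one_le_cast _) hN)
  · have hcol := chiSq_le_total_mul_card_sub_one (fun j i => hn i j) fun j i => by
      rw [expected_transpose]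
      exact he i j
    rw [chiSq_transpose, total_transpose] at hcol
    exact hcol.trans (mul_le_mul_of_nonneg_left (sub_one_le_cast _) hN)

end ContingencyTable

end

open ContingencyTable in
theorem cramers_V_bounds_general
    (k₁ k₂ : ℕ)
    (n : Fin k₁ → Fin k₂ → ℝ) (hn : ∀ i j, 0 ≤ n i j)
    (N : ℝ) (hN : N = ∑ i, ∑ j, n i j)
    (e : Fin k₁ → Fin k₂ → ℝ)
    (he : ∀ i j, e i j = (∑ j', n i j') * (∑ i', n i' j) / N)
    (hepos : ∀ i j, 0 < e i j)
    (chi2 : ℝ) (hχ : chi2 = ∑ i, ∑ j, (n i j - e i j) ^ 2 / e i j)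
    (V : ℝ) (hV : V = Real.sqrt (chi2 / (N * (min (k₁ - 1) (k₂ - 1) : ℕ)))) :
    0 ≤ V ∧ V ≤ 1 := by
  subst hN
  have he : e = expected n := by ext i j; exact he i j
  subst he hχ hV
  refine ⟨Real.sqrt_nonneg _, Real.sqrt_le_one.mpr (div_le_one_of_le₀ ?_ ?_)⟩
  · have hchi := chiSq_le_total_mul_min hn fun i j => (hepos i j).ne'
    rw [Fintype.card_fin, Fintype.card_fin] at hchi
    exact hchi
  · exact mul_nonneg (total_nonneg hn) (Nat.cast_nonneg _)

/-- Cramér's `V = sqrt(chi2 / (N · min(k₁−1, k₂−1)))` satisfies `0 ≤ V ≤ 1`, where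
`chi2` is the Pearson chi-squared statistic of a `k₁ × k₂` contingency table of
nonnegative counts with total `N > 0` and positive expected counts. -/
theorem cramers_V_bounds
    (k₁ k₂ : ℕ) (hk₁ : 2 ≤ k₁) (hk₂ : 2 ≤ k₂)
    (n : Fin k₁ → Fin k₂ → ℝ) (hn : ∀ i j, 0 ≤ n i j)
    (N : ℝ) (hN : N = ∑ i, ∑ j, n i j) (hNpos : 0 < N)
    (e : Fin k₁ → Fin k₂ → ℝ)
    (he : ∀ i j, e i j = (∑ j', n i j') * (∑ i', n i' j) / N)
    (hepos : ∀ i j, 0 < e i j)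
    (chi2 : ℝ) (hχ : chi2 = ∑ i, ∑ j, (n i j - e i j) ^ 2 / e i j)
    (V : ℝ) (hV : V = Real.sqrt (chi2 / (N * (min (k₁ - 1) (k₂ - 1) : ℕ)))) :
    0 ≤ V ∧ V ≤ 1 :=
  cramers_V_bounds_general k₁ k₂ n hn N hN e he hepos chi2 hχ V hV
end

section
/- If S is independent of the pair (A₁, A₂) and A₁, A₂ are independent uniform assignments, then for any trigger state s with P(S=s) > 0 and any measurable outcome function, the conditional mean E[Y | A₁=a₁, A₂=a₂, S=s] is identified from observed data in stratum s, and the stratified estimand Σ_s P(S=s|S∈I)·(E[Y|A=t,S=s] − E[Y|A=c,S=s]) equals E[Y(t) − Y(c) | S ∈ I] under consistency of potential outcomes (Y = Y(A)) and the exclusion restriction that Y(a) depends only on the arms of triggered experiments. -/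
/-!
Randomization makes the event `{A = a}` independent of `(S, Y a)`, so both
`P(A = a, S = s)` and `E[Y a; A = a, S = s]` factor with the common factor `P(A = a)`: conditioning
on `A = a` leaves the stratum mean of `Y a` unchanged, and by consistency `Yobs = Y a` on
`{A = a}`. Weighting the stratum means by `P(S = s) / P(S ∈ I)` turns them back into integrals over
the disjoint strata, which add up to the conditional mean on `{S ∈ I}`.
-/

open MeasureTheory ProbabilityTheory

namespace ProbabilityTheory

variable {Ω β γ : Type*} [MeasurableSpace Ω] {μ : Measure Ω}

theorem integral_cond (f : Ω → ℝ) (s : Set Ω) :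
    ∫ ω, f ω ∂μ[|s] = (μ.real s)⁻¹ * ∫ ω in s, f ω ∂μ := by
  rw [cond, integral_smul_measure, ENNReal.toReal_inv, smul_eq_mul, measureReal_def]

theorem measureReal_mul_integral_cond [IsFiniteMeasure μ] (f : Ω → ℝ) (s : Set Ω) :
    μ.real s * ∫ ω, f ω ∂μ[|s] = ∫ ω in s, f ω ∂μ := by
  rw [integral_cond]
  by_cases hs : μ s = 0
  · rw [setIntegral_measure_zero f hs, mul_zero, mul_zero]
  · exact mul_inv_cancel_left₀ ((measureReal_ne_zero_iff).mpr hs) _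

theorem _root_.MeasureTheory.Integrable.cond {f : Ω → ℝ} (hf : Integrable f μ) (s : Set Ω) :
    Integrable f μ[|s] := by
  by_cases hs : μ s = 0
  · rw [cond_eq_zero_of_meas_eq_zero hs]
    exact integrable_zero_measure
  · exact hf.restrict.smul_measure (ENNReal.inv_ne_top.mpr hs)

variable [MeasurableSpace β] [MeasurableSpace γ] {X : Ω → β} {T : Ω → γ} {W : Ω → ℝ}

theorem IndepFun.setIntegral_preimage_inter_eq_mul
    (h : IndepFun X (fun ω => (T ω, W ω)) μ) (hX : Measurable X) (hT : Measurable T)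
    (hW : AEMeasurable W μ) {B : Set β} {C : Set γ} (hB : MeasurableSet B)
    (hC : MeasurableSet C) :
    ∫ ω in X ⁻¹' B ∩ T ⁻¹' C, W ω ∂μ = μ.real (X ⁻¹' B) * ∫ ω in T ⁻¹' C, W ω ∂μ := by
  have hprod := h.integral_fun_comp_mul_comp (f := B.indicator 1)
    (g := fun p : γ × ℝ => C.indicator 1 p.1 * p.2) hX.aemeasurable
    (hT.aemeasurable.prodMk hW)
    (measurable_const.indicator hB).aestronglyMeasurable
    (((measurable_const.indicator hC).comp measurable_fst).mul measurable_snd).aestronglyMeasurable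
  have hjoint : (fun ω => B.indicator 1 (X ω) * (C.indicator 1 (T ω) * W ω))
      = (X ⁻¹' B ∩ T ⁻¹' C).indicator W := by
    ext ω
    by_cases hXω : X ω ∈ B <;> by_cases hTω : T ω ∈ C <;> simp [hXω, hTω]
  have hstratum : (fun ω => C.indicator 1 (T ω) * W ω) = (T ⁻¹' C).indicator W := by
    ext ω
    by_cases hTω : T ω ∈ C <;> simp [hTω]
  simp only [hjoint, hstratum, integral_indicator ((hX hB).inter (hT hC)),
    integral_indicator (hT hC)] at hprod
  rw [hprod, ← integral_indicator_one (hX hB)]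
  rfl

theorem IndepFun.integral_cond_preimage_inter [IsFiniteMeasure μ]
    (h : IndepFun X (fun ω => (T ω, W ω)) μ) (hX : Measurable X) (hT : Measurable T)
    (hW : AEMeasurable W μ) {B : Set β} {C : Set γ} (hB : MeasurableSet B)
    (hC : MeasurableSet C) (hpos : μ (X ⁻¹' B ∩ T ⁻¹' C) ≠ 0) :
    ∫ ω, W ω ∂μ[|X ⁻¹' B ∩ T ⁻¹' C] = ∫ ω, W ω ∂μ[|T ⁻¹' C] := by
  have hXT : IndepFun X T μ := h.comp measurable_id measurable_fst
  have hmul : μ.real (X ⁻¹' B ∩ T ⁻¹' C) = μ.real (X ⁻¹' B) * μ.real (T ⁻¹' C) := by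
    rw [measureReal_def, hXT.measure_inter_preimage_eq_mul _ _ hB hC, ENNReal.toReal_mul]
    rfl
  have hposX : μ.real (X ⁻¹' B) ≠ 0 := by
    intro h0
    exact ((measureReal_ne_zero_iff).mpr hpos) (by rw [hmul, h0, zero_mul])
  rw [integral_cond, integral_cond, h.setIntegral_preimage_inter_eq_mul hX hT hW hB hC, hmul,
    mul_inv, mul_comm (μ.real (X ⁻¹' B))⁻¹, mul_assoc, inv_mul_cancel_left₀ hposX]

theorem sum_measure_div_mul_integral_cond_fiber [IsFiniteMeasure μ] [MeasurableSingletonClass γ]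
    (hT : Measurable T) (I : Finset γ) {f : Ω → ℝ} (hf : Integrable f μ) :
    ∑ s ∈ I, (μ (T ⁻¹' {s}) / μ (T ⁻¹' ↑I)).toReal * ∫ ω, f ω ∂μ[|T ⁻¹' {s}]
      = ∫ ω, f ω ∂μ[|T ⁻¹' ↑I] := by
  have hterm : ∀ s ∈ I, (μ (T ⁻¹' {s}) / μ (T ⁻¹' ↑I)).toReal * ∫ ω, f ω ∂μ[|T ⁻¹' {s}]
      = (μ.real (T ⁻¹' ↑I))⁻¹ * ∫ ω in T ⁻¹' {s}, f ω ∂μ := by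
    intro s _
    rw [ENNReal.toReal_div, ← measureReal_def, ← measureReal_def,
      ← measureReal_mul_integral_cond]
    ring
  have hfibers : T ⁻¹' ↑I = ⋃ s ∈ I, T ⁻¹' {s} := by
    ext ω; simp
  have hdisj : Set.PairwiseDisjoint ↑I fun s => T ⁻¹' {s} :=
    fun _ _ _ _ hne => (Set.disjoint_singleton.mpr hne).preimage T
  rw [Finset.sum_congr rfl hterm, ← Finset.mul_sum,
    ← integral_biUnion_finset I (fun s _ => hT (measurableSet_singleton s)) hdisj
      (fun _ _ => hf.integrableOn), ← hfibers, integral_cond]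

end ProbabilityTheory

theorem post_stratified_identification_general
    {Ω : Type*} [MeasureSpace Ω] [IsProbabilityMeasure (ℙ : Measure Ω)]
    {α₁ α₂ : Type*} [MeasurableSpace α₁] [MeasurableSpace α₂]
    [MeasurableSingletonClass α₁] [MeasurableSingletonClass α₂]
    (A : Ω → α₁ × α₂) (S : Ω → Bool × Bool)
    (hA : Measurable A) (hS : Measurable S)
    (Y : α₁ × α₂ → Ω → ℝ)
    (hYint : ∀ a, Integrable (Y a) ℙ)
    (Yobs : Ω → ℝ)
    -- consistency
    (hcons : ∀ ω, Yobs ω = Y (A ω) ω)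
    -- randomization: A is independent of the pair (S, Y a) for each a
    (hrand : ∀ a : α₁ × α₂, IndepFun A (fun ω => (S ω, Y a ω)) ℙ)
    (t c : α₁ × α₂) (I : Finset (Bool × Bool))
    (hposA : ∀ s ∈ I, 0 < ℙ (A ⁻¹' {t} ∩ S ⁻¹' {s}) ∧
                      0 < ℙ (A ⁻¹' {c} ∩ S ⁻¹' {s})) :
    (∀ a : α₁ × α₂, ∀ s ∈ I, 0 < ℙ (A ⁻¹' {a} ∩ S ⁻¹' {s}) →
      ∫ ω, Yobs ω ∂(ℙ[|A ⁻¹' {a} ∩ S ⁻¹' {s}])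
        = ∫ ω, Y a ω ∂(ℙ[|S ⁻¹' {s}])) ∧
    ∑ s ∈ I,
        (ℙ (S ⁻¹' {s}) / ℙ (S ⁻¹' ↑I)).toReal
          * ((∫ ω, Yobs ω ∂(ℙ[|A ⁻¹' {t} ∩ S ⁻¹' {s}]))
             - ∫ ω, Yobs ω ∂(ℙ[|A ⁻¹' {c} ∩ S ⁻¹' {s}]))
      = ∫ ω, (Y t ω - Y c ω) ∂(ℙ[|S ⁻¹' ↑I]) := by
  have hcond : ∀ a s, 0 < ℙ (A ⁻¹' {a} ∩ S ⁻¹' {s}) →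
      ∫ ω, Yobs ω ∂(ℙ[|A ⁻¹' {a} ∩ S ⁻¹' {s}]) = ∫ ω, Y a ω ∂(ℙ[|S ⁻¹' {s}]) := by
    intro a s hpos
    have hE := (hA (measurableSet_singleton a)).inter (hS (measurableSet_singleton s))
    calc ∫ ω, Yobs ω ∂(ℙ[|A ⁻¹' {a} ∩ S ⁻¹' {s}])
        = ∫ ω, Y a ω ∂(ℙ[|A ⁻¹' {a} ∩ S ⁻¹' {s}]) :=
          integral_congr_ae <| ae_cond_of_forall_mem hE fun ω hω => by
            rw [hcons, Set.mem_singleton_iff.mp hω.1]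
      _ = ∫ ω, Y a ω ∂(ℙ[|S ⁻¹' {s}]) :=
          (hrand a).integral_cond_preimage_inter hA hS (hYint a).aemeasurable
            (measurableSet_singleton a) (measurableSet_singleton s) hpos.ne'
  refine ⟨fun a s _ => hcond a s, ?_⟩
  rw [← sum_measure_div_mul_integral_cond_fiber hS I (f := fun ω => Y t ω - Y c ω)
    ((hYint t).sub (hYint c))]
  refine Finset.sum_congr rfl fun s hs => ?_
  rw [hcond t s (hposA s hs).1, hcond c s (hposA s hs).2,
    integral_sub ((hYint t).cond _) ((hYint c).cond _)]

/-- Identification of the post-stratified estimand (two overlapping experiments).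
Under consistency (`Yobs = Y (A ·) ·`), randomization (`A` independent of the
pair `(S, Y a)` for every arm combination `a`), the exclusion restriction that
the potential outcome depends only on the arms of triggered experiments, and
positivity, the stratified weighted estimand
`∑_{s ∈ I} P(S=s | S∈I) · (E[Yobs | A=t, S=s] − E[Yobs | A=c, S=s])`
equals the causal effect `E[Y(t) − Y(c) | S ∈ I]`; moreover each conditional
mean `E[Yobs | A=a, S=s]` is identified as `E[Y(a) | S=s]`. -/
theorem post_stratified_identification
    {Ω : Type*} [MeasureSpace Ω] [IsProbabilityMeasure (ℙ : Measure Ω)]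
    {α₁ α₂ : Type*} [MeasurableSpace α₁] [MeasurableSpace α₂]
    [MeasurableSingletonClass α₁] [MeasurableSingletonClass α₂]
    (A : Ω → α₁ × α₂) (S : Ω → Bool × Bool)
    (hA : Measurable A) (hS : Measurable S)
    (Y : α₁ × α₂ → Ω → ℝ) (hYmeas : ∀ a, Measurable (Y a))
    (hYint : ∀ a, Integrable (Y a) ℙ)
    (Yobs : Ω → ℝ)
    -- consistency
    (hcons : ∀ ω, Yobs ω = Y (A ω) ω)
    -- randomization: A is independent of the pair (S, Y a) for each a
    (hrand : ∀ a : α₁ × α₂, IndepFun A (fun ω => (S ω, Y a ω)) ℙ)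
    -- exclusion restriction: Y a depends only on arms of triggered experiments
    (hexcl₁ : ∀ ω, (S ω).1 = false → ∀ a₁ a₁' a₂, Y (a₁, a₂) ω = Y (a₁', a₂) ω)
    (hexcl₂ : ∀ ω, (S ω).2 = false → ∀ a₁ a₂ a₂', Y (a₁, a₂) ω = Y (a₁, a₂') ω)
    (t c : α₁ × α₂) (I : Finset (Bool × Bool))
    (hI : 0 < ℙ (S ⁻¹' ↑I))
    (hposA : ∀ s ∈ I, 0 < ℙ (A ⁻¹' {t} ∩ S ⁻¹' {s}) ∧
                      0 < ℙ (A ⁻¹' {c} ∩ S ⁻¹' {s}))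
    (hposS : ∀ s ∈ I, 0 < ℙ (S ⁻¹' {s})) :
    (∀ a : α₁ × α₂, ∀ s ∈ I, 0 < ℙ (A ⁻¹' {a} ∩ S ⁻¹' {s}) →
      ∫ ω, Yobs ω ∂(ℙ[|A ⁻¹' {a} ∩ S ⁻¹' {s}])
        = ∫ ω, Y a ω ∂(ℙ[|S ⁻¹' {s}])) ∧
    ∑ s ∈ I,
        (ℙ (S ⁻¹' {s}) / ℙ (S ⁻¹' ↑I)).toReal
          * ((∫ ω, Yobs ω ∂(ℙ[|A ⁻¹' {t} ∩ S ⁻¹' {s}]))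
             - ∫ ω, Yobs ω ∂(ℙ[|A ⁻¹' {c} ∩ S ⁻¹' {s}]))
      = ∫ ω, (Y t ω - Y c ω) ∂(ℙ[|S ⁻¹' ↑I]) :=
  post_stratified_identification_general A S hA hS Y hYint Yobs hcons hrand t c I hposA
end

section
/- Monotonicity of the MEA variance ratio in the number of variants: for fixed k ≥ 1 and r ∈ (0,1), the function ℓ ↦ ((1+(ℓ−1)r)^k − (1−r)^k)/(ℓ^k(1−(1−r)^k)) is nonincreasing in ℓ ≥ 1 (real-valued ℓ). -/
theorem monotoneOn_add_pow_sub_pow {R : Type*} [CommRing R] [LinearOrder R] [IsStrictOrderedRing R]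
    {c : R} (hc : 0 ≤ c) (n : ℕ) :
    MonotoneOn (fun x => (x + c) ^ n - x ^ n) (Set.Ici 0) := by
  intro a (ha : 0 ≤ a) b (hb : 0 ≤ b) hab
  simp only [← geom_sum₂_mul, add_sub_cancel_left]
  gcongr

theorem one_add_sub_one_mul_pow_sub_div_pow_eq {ℓ : ℝ} (hℓ : ℓ ≠ 0) (r : ℝ) (k : ℕ) :
    ((1 + (ℓ - 1) * r) ^ k - (1 - r) ^ k) / ℓ ^ k = ((1 - r) / ℓ + r) ^ k - ((1 - r) / ℓ) ^ k := by
  rw [sub_div, ← div_pow, ← div_pow]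
  congr 2
  field_simp
  ring

theorem mea_variance_ratio_antitone_in_variants_general
    (k : ℕ) (r : ℝ) (hr0 : 0 < r) (hr1 : r < 1) :
    ∀ ℓ₁ ℓ₂ : ℝ, 1 ≤ ℓ₁ → ℓ₁ ≤ ℓ₂ →
      ((1 + (ℓ₂ - 1) * r) ^ k - (1 - r) ^ k) / (ℓ₂ ^ k * (1 - (1 - r) ^ k))
        ≤ ((1 + (ℓ₁ - 1) * r) ^ k - (1 - r) ^ k) / (ℓ₁ ^ k * (1 - (1 - r) ^ k)) := by
  intro ℓ₁ ℓ₂ h1 h12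
  have hℓ₁ : 0 < ℓ₁ := by linarith
  have hℓ₂ : 0 < ℓ₂ := by linarith
  have hden : 0 ≤ 1 - (1 - r) ^ k := sub_nonneg.2 (pow_le_one₀ (by linarith) (by linarith))
  rw [← div_div, ← div_div, one_add_sub_one_mul_pow_sub_div_pow_eq hℓ₁.ne',
    one_add_sub_one_mul_pow_sub_div_pow_eq hℓ₂.ne']
  -- with `s = (1 - r) / ℓ`, the ratio is `((s + r) ^ k - s ^ k) / (1 - (1 - r) ^ k)`, and `s` decreases in `ℓ`
  refine div_le_div_of_nonneg_right (monotoneOn_add_pow_sub_pow hr0.le k ?_ ?_ ?_) hden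
  · exact div_nonneg (by linarith) hℓ₂.le
  · exact div_nonneg (by linarith) hℓ₁.le
  · exact div_le_div_of_nonneg_left (by linarith) hℓ₁ h12

/-- Monotonicity of the MEA-to-factorial variance ratio in the number of
variants: for fixed `k ≥ 1` and `r ∈ (0,1)`, the function
`ℓ ↦ ((1+(ℓ−1)r)^k − (1−r)^k) / (ℓ^k (1 − (1−r)^k))`
is nonincreasing on real `ℓ ≥ 1`. -/
theorem mea_variance_ratio_antitone_in_variants
    (k : ℕ) (hk : 1 ≤ k) (r : ℝ) (hr0 : 0 < r) (hr1 : r < 1) :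
    ∀ ℓ₁ ℓ₂ : ℝ, 1 ≤ ℓ₁ → ℓ₁ ≤ ℓ₂ →
      ((1 + (ℓ₂ - 1) * r) ^ k - (1 - r) ^ k) / (ℓ₂ ^ k * (1 - (1 - r) ^ k))
        ≤ ((1 + (ℓ₁ - 1) * r) ^ k - (1 - r) ^ k) / (ℓ₁ ^ k * (1 - (1 - r) ^ k)) :=
  mea_variance_ratio_antitone_in_variants_general k r hr0 hr1
end
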